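/- Fix κ ∈ (0,1) and λ = √(1−κ²). Let ω_κ and ω_κ′ be the fundamental half-periods (ω_κ real positive, −i·ω_κ′ > 0) of the Weierstrass function coperiodic with Shen's signature-four function with modulus κ. Given the modular-transformation identity ℘(z; ω_κ, ω_κ′/2) = −2·p_λ(√2·i·z), one has ω_κ′ = √2·i·ω_λ; consequently ω_κ = (π/2)·F(1/4, 3/4; 1; κ²) and ω_κ′ = i·(√2·π/2)·F(1/4, 3/4; 1; 1−κ²). -/
import Mathlib


open Complex

/-- The Weierstrass ℘-function for the lattice generated by `2ω` and `2ω'`. -/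
noncomputable def wp (ω ω' : ℂ) (z : ℂ) : ℂ :=
  1 / z ^ 2 + ∑' p : {p : ℤ × ℤ // p ≠ 0},
    (1 / (z - (2 * (p.1.1 : ℂ) * ω + 2 * (p.1.2 : ℂ) * ω')) ^ 2
      - 1 / (2 * (p.1.1 : ℂ) * ω + 2 * (p.1.2 : ℂ) * ω') ^ 2)

/-- The quadrinvariant g₂ of the lattice generated by `2ω` and `2ω'`. -/
noncomputable def g2inv (ω ω' : ℂ) : ℂ :=
  60 * ∑' p : {p : ℤ × ℤ // p ≠ 0},
    1 / (2 * (p.1.1 : ℂ) * ω + 2 * (p.1.2 : ℂ) * ω') ^ 4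

/-- The cubinvariant g₃ of the lattice generated by `2ω` and `2ω'`. -/
noncomputable def g3inv (ω ω' : ℂ) : ℂ :=
  140 * ∑' p : {p : ℤ × ℤ // p ≠ 0},
    1 / (2 * (p.1.1 : ℂ) * ω + 2 * (p.1.2 : ℂ) * ω') ^ 6

/-- The Gauss hypergeometric series ₂F₁(a,b;c;x) as a real function. -/
noncomputable def hypF (a b c x : ℝ) : ℝ :=
  ∑' n : ℕ, ((ascPochhammer ℝ n).eval a * (ascPochhammer ℝ n).eval b) /
    ((ascPochhammer ℝ n).eval c * n.factorial) * x ^ n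


namespace Stmt12aux

noncomputable def latt (ω ω' : ℂ) (p : ℤ × ℤ) : ℂ := 2*(p.1:ℂ)*ω + 2*(p.2:ℂ)*ω'

variable {ω ω' : ℂ}

lemma latt_re (hω : ω.im = 0) (hω' : ω'.re = 0) (p : ℤ × ℤ) :
    (latt ω ω' p).re = 2*(p.1:ℝ)*ω.re := by
  simp [latt, Complex.add_re, Complex.mul_re, hω, hω']

lemma latt_im (hω : ω.im = 0) (hω' : ω'.re = 0) (p : ℤ × ℤ) :
    (latt ω ω' p).im = 2*(p.2:ℝ)*ω'.im := by
  simp [latt, Complex.add_im, Complex.mul_im, hω, hω']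

lemma norm_latt_ge (hω : ω.im = 0) (hA : 0 < ω.re) (hω' : ω'.re = 0) (hB : 0 < ω'.im)
    (p : ℤ × ℤ) :
    2 * min ω.re ω'.im * (max p.1.natAbs p.2.natAbs : ℕ) ≤ ‖latt ω ω' p‖ := by
  have h1 : |(latt ω ω' p).re| ≤ ‖latt ω ω' p‖ := Complex.abs_re_le_norm _
  have h2 : |(latt ω ω' p).im| ≤ ‖latt ω ω' p‖ := Complex.abs_im_le_norm _
  rw [latt_re hω hω'] at h1
  rw [latt_im hω hω'] at h2
  have e1 : |2*(p.1:ℝ)*ω.re| = 2 * |(p.1:ℝ)| * ω.re := by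
    rw [abs_mul, abs_mul, abs_of_pos hA]; norm_num
  have e2 : |2*(p.2:ℝ)*ω'.im| = 2 * |(p.2:ℝ)| * ω'.im := by
    rw [abs_mul, abs_mul, abs_of_pos hB]; norm_num
  rw [e1] at h1; rw [e2] at h2
  rcases max_cases (p.1.natAbs) (p.2.natAbs) with ⟨hm, hle⟩ | ⟨hm, hle⟩ <;> rw [hm]
  · refine le_trans ?_ h1
    push_cast [Nat.cast_natAbs]
    have := min_le_left ω.re ω'.im
    nlinarith [abs_nonneg (p.1:ℝ), lt_min hA hB]
  · refine le_trans ?_ h2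
    push_cast [Nat.cast_natAbs]
    have := min_le_right ω.re ω'.im
    nlinarith [abs_nonneg (p.2:ℝ), lt_min hA hB]

lemma one_le_maxN {p : ℤ × ℤ} (hp : p ≠ 0) : 1 ≤ (max p.1.natAbs p.2.natAbs) := by
  rcases Nat.eq_zero_or_pos (max p.1.natAbs p.2.natAbs) with h | h
  · simp only [Nat.max_eq_zero_iff, Int.natAbs_eq_zero] at h
    exact absurd (Prod.ext h.1 h.2) hp
  · exact h

lemma two_c_le_norm_latt (hω : ω.im = 0) (hA : 0 < ω.re) (hω' : ω'.re = 0) (hB : 0 < ω'.im)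
    {p : ℤ × ℤ} (hp : p ≠ 0) :
    2 * min ω.re ω'.im ≤ ‖latt ω ω' p‖ := by
  have := norm_latt_ge hω hA hω' hB p
  have h1 : (1:ℝ) ≤ (max p.1.natAbs p.2.natAbs : ℕ) := by exact_mod_cast one_le_maxN hp
  nlinarith [lt_min hA hB]

lemma latt_ne_zero (hω : ω.im = 0) (hA : 0 < ω.re) (hω' : ω'.re = 0) (hB : 0 < ω'.im)
    {p : ℤ × ℤ} (hp : p ≠ 0) : latt ω ω' p ≠ 0 := by
  intro h
  have := two_c_le_norm_latt hω hA hω' hB hp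
  rw [h, norm_zero] at this
  nlinarith [lt_min hA hB]

lemma latt_injective (hω : ω.im = 0) (hA : 0 < ω.re) (hω' : ω'.re = 0) (hB : 0 < ω'.im) :
    Function.Injective (latt ω ω') := by
  intro p q h
  have hre := congrArg Complex.re h
  have him := congrArg Complex.im h
  rw [latt_re hω hω', latt_re hω hω'] at hre
  rw [latt_im hω hω', latt_im hω hω'] at him
  have h1 : (p.1:ℝ) = q.1 := by
    have hA' := hA.ne'
    nlinarith [hre, hA]
  have h2 : (p.2:ℝ) = q.2 := by nlinarith [him, hB]
  exact Prod.ext (by exact_mod_cast h1) (by exact_mod_cast h2)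

set_option maxHeartbeats 1000000 in
lemma summable_inv_cube (hω : ω.im = 0) (hA : 0 < ω.re) (hω' : ω'.re = 0) (hB : 0 < ω'.im)
    (K : ℝ) :
    Summable (fun p : {p : ℤ × ℤ // p ≠ 0} => K / ‖latt ω ω' p.1‖^3) := by
  set c := min ω.re ω'.im with hc
  have hcpos : 0 < c := lt_min hA hB
  have base : Summable (fun x : Fin 2 → ℤ => ‖x‖ ^ (-(3:ℝ))) :=
    EisensteinSeries.summable_one_div_norm_rpow (by norm_num)
  have hinj : Function.Injective (fun p : ℤ × ℤ => (![p.1, p.2] : Fin 2 → ℤ)) := by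
    intro p q h
    have h0 := congrFun h 0
    have h1 := congrFun h 1
    simp at h0 h1
    exact Prod.ext h0 h1
  have base2 : Summable (fun p : ℤ × ℤ => ((max p.1.natAbs p.2.natAbs : ℕ) : ℝ) ^ (-(3:ℝ))) := by
    refine (base.comp_injective hinj).congr fun p => ?_
    rw [Function.comp_apply, EisensteinSeries.norm_eq_max_natAbs]
    simp
  have base3 := base2.subtype {p : ℤ × ℤ | p ≠ 0}
  have base4 : Summable (fun p : {p : ℤ × ℤ // p ≠ 0} =>
      ((max p.1.1.natAbs p.1.2.natAbs : ℕ) : ℝ) ^ (-(3:ℝ))) := base3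
  have habs : Summable (fun p : {p : ℤ × ℤ // p ≠ 0} => |K| / ‖latt ω ω' p.1‖^3) := by
    refine ((base4.mul_left (|K| * ((2*c)^3)⁻¹)).of_nonneg_of_le
      (fun p => by positivity) (fun p => ?_))
    have hmax : (1:ℝ) ≤ ((max p.1.1.natAbs p.1.2.natAbs : ℕ) : ℝ) := by
      exact_mod_cast one_le_maxN p.2
    have hrpow : ((max p.1.1.natAbs p.1.2.natAbs : ℕ) : ℝ) ^ (-(3:ℝ))
        = (((max p.1.1.natAbs p.1.2.natAbs : ℕ) : ℝ)^3)⁻¹ := by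
      rw [Real.rpow_neg (by linarith), ← Real.rpow_natCast (((max p.1.1.natAbs p.1.2.natAbs : ℕ) : ℝ)) 3]
      norm_num
    rw [hrpow]
    have hlow := norm_latt_ge hω hA hω' hB p.1
    have hwpos : 0 < ‖latt ω ω' p.1‖ := by
      have := two_c_le_norm_latt hω hA hω' hB p.2
      linarith
    have hcube : (2*c)^3 * ((max p.1.1.natAbs p.1.2.natAbs : ℕ) : ℝ)^3 ≤ ‖latt ω ω' p.1‖^3 := by
      calc (2*c)^3 * ((max p.1.1.natAbs p.1.2.natAbs : ℕ) : ℝ)^3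
          = (2*c*((max p.1.1.natAbs p.1.2.natAbs : ℕ) : ℝ))^3 := by ring
        _ ≤ _ := by
            apply pow_le_pow_left₀ (by positivity) hlow 3
    have hKnn : (0:ℝ) ≤ |K| := abs_nonneg K
    have hden : (0:ℝ) < (2*c)^3 * ((max p.1.1.natAbs p.1.2.natAbs : ℕ) : ℝ)^3 := by positivity
    calc |K| / ‖latt ω ω' p.1‖^3
        ≤ |K| / ((2*c)^3 * ((max p.1.1.natAbs p.1.2.natAbs : ℕ) : ℝ)^3) :=
          div_le_div_of_nonneg_left hKnn hden hcube
      _ = |K| * ((2*c)^3)⁻¹ * (((max p.1.1.natAbs p.1.2.natAbs : ℕ) : ℝ)^3)⁻¹ := by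
          field_simp
      _ ≤ _ := le_refl _
  refine Summable.of_abs (habs.congr fun p => ?_)
  rw [abs_div, _root_.abs_of_nonneg (by positivity : (0:ℝ) ≤ ‖latt ω ω' p.1‖^3)]

lemma term_bound {c N ρ : ℝ} (hc : 0 < c) (hN : 0 ≤ N) (hρ : 0 < ρ)
    {z w : ℂ} (hz : ‖z‖ ≤ N) (hd : ρ ≤ ‖z - w‖) (hw : 2*c ≤ ‖w‖) :
    ‖1/(z-w)^2 - 1/w^2‖ ≤ ((1/ρ^2 + 1/(2*c)^2) * (2*(N+1))^3 + 12*(N+1)) / ‖w‖^3 := by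
  have hwpos : (0:ℝ) < ‖w‖ := by linarith
  have hzwpos : (0:ℝ) < ‖z - w‖ := by linarith
  have hwne : w ≠ 0 := by intro h; rw [h, norm_zero] at hwpos; exact lt_irrefl _ hwpos
  have hzwne : z - w ≠ 0 := by
    intro h; rw [h, norm_zero] at hzwpos; exact lt_irrefl _ hzwpos
  by_cases hbig : 2*(N+1) ≤ ‖w‖
  · -- far terms
    have hzw2 : ‖w‖/2 ≤ ‖z - w‖ := by
      have h1 : ‖w‖ - ‖z‖ ≤ ‖z - w‖ := by
        rw [norm_sub_rev z w]
        exact norm_sub_norm_le w z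
      linarith
    have heq : 1/(z-w)^2 - 1/w^2 = z*(2*w - z)/((z-w)^2 * w^2) := by
      field_simp
      ring
    rw [heq, norm_div, norm_mul, norm_mul, norm_pow, norm_pow]
    have h2wz : ‖2*w - z‖ ≤ 2*‖w‖ + ‖z‖ := by
      calc ‖2*w - z‖ ≤ ‖2*w‖ + ‖z‖ := norm_sub_le _ _
        _ = 2*‖w‖ + ‖z‖ := by rw [norm_mul]; norm_num
    have hnum : ‖z‖ * ‖2*w - z‖ ≤ 3*(N+1)*‖w‖ := by
      have hzn : ‖z‖ ≤ ‖w‖/2 := by linarith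
      nlinarith [norm_nonneg z, norm_nonneg (2*w - z)]
    have hden : ‖w‖^4/4 ≤ ‖z-w‖^2 * ‖w‖^2 := by
      have hsq := mul_le_mul hzw2 hzw2 (by positivity) (norm_nonneg _)
      nlinarith
    have hS : (0:ℝ) ≤ (1/ρ^2 + 1/(2*c)^2) * (2*(N+1))^3 := by positivity
    calc ‖z‖ * ‖2*w - z‖ / (‖z-w‖^2 * ‖w‖^2)
        ≤ (3*(N+1)*‖w‖) / (‖w‖^4/4) :=
          div_le_div₀ (by positivity) hnum (by positivity) hden
      _ ≤ _ := by
          rw [div_le_div_iff₀ (by positivity) (by positivity)]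
          nlinarith [mul_nonneg hS (pow_nonneg (norm_nonneg w) 4)]
  · -- near terms
    push_neg at hbig
    have hb1 : ‖1/(z-w)^2 - 1/w^2‖ ≤ 1/ρ^2 + 1/(2*c)^2 := by
      calc ‖1/(z-w)^2 - 1/w^2‖ ≤ ‖1/(z-w)^2‖ + ‖1/w^2‖ := norm_sub_le _ _
        _ = 1/‖z-w‖^2 + 1/‖w‖^2 := by rw [norm_div, norm_div, norm_pow, norm_pow]; norm_num
        _ ≤ 1/ρ^2 + 1/(2*c)^2 := by
            gcongr <;> assumption
    refine hb1.trans ?_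
    rw [le_div_iff₀ (by positivity)]
    have hcube : ‖w‖^3 ≤ (2*(N+1))^3 := by
      apply pow_le_pow_left₀ (norm_nonneg w) hbig.le
    have hS : (0:ℝ) < 1/ρ^2 + 1/(2*c)^2 := by positivity
    nlinarith

lemma separation (hω : ω.im = 0) (hA : 0 < ω.re) (hω' : ω'.re = 0) (hB : 0 < ω'.im)
    (z0 : ℂ) :
    ∃ δ : ℝ, 0 < δ ∧ δ ≤ 1/2 ∧
      ∀ p : ℤ × ℤ, p ≠ 0 → latt ω ω' p ≠ z0 → 2*δ ≤ ‖z0 - latt ω ω' p‖ := by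
  classical
  set c := min ω.re ω'.im with hc
  have hcpos : 0 < c := lt_min hA hB
  set k : ℕ := ⌈(‖z0‖+1)/(2*c)⌉₊ with hk
  set T : Finset (ℤ × ℤ) := Finset.Icc (-(k:ℤ)) k ×ˢ Finset.Icc (-(k:ℤ)) k with hT
  set D : Finset ℝ :=
    insert (1:ℝ) ((T.filter fun p => p ≠ 0 ∧ latt ω ω' p ≠ z0).image
      fun p => ‖z0 - latt ω ω' p‖) with hD
  have hDne : D.Nonempty := ⟨1, Finset.mem_insert_self _ _⟩
  set δ : ℝ := D.min' hDne / 2 with hδ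
  have hDpos : ∀ x ∈ D, 0 < x := by
    intro x hx
    rw [hD, Finset.mem_insert] at hx
    rcases hx with h | h
    · rw [h]; norm_num
    · obtain ⟨p, hp, rfl⟩ := Finset.mem_image.mp h
      rw [Finset.mem_filter] at hp
      have : z0 - latt ω ω' p ≠ 0 := fun h0 => hp.2.2 (by
        have := sub_eq_zero.mp h0; exact this.symm)
      exact norm_pos_iff.mpr this
  have hminpos : 0 < D.min' hDne := hDpos _ (D.min'_mem hDne)
  have hminle1 : D.min' hDne ≤ 1 := D.min'_le 1 (Finset.mem_insert_self _ _)
  refine ⟨δ, by positivity, by rw [hδ]; linarith, ?_⟩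
  intro p hp hpz
  by_cases hpT : p ∈ T
  · have hmem : ‖z0 - latt ω ω' p‖ ∈ D := by
      rw [hD, Finset.mem_insert]
      right
      exact Finset.mem_image.mpr ⟨p, Finset.mem_filter.mpr ⟨hpT, hp, hpz⟩, rfl⟩
    have := D.min'_le _ hmem
    rw [hδ]; linarith
  · -- far from the box: big lattice norm
    have hknat : (‖z0‖+1)/(2*c) ≤ (k:ℝ) := Nat.le_ceil _
    have hfar : (k:ℕ) + 1 ≤ max p.1.natAbs p.2.natAbs := by
      by_contra hcon
      push_neg at hcon
      apply hpT
      rw [hT, Finset.mem_product, Finset.mem_Icc, Finset.mem_Icc]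
      have h1 : p.1.natAbs ≤ k := by omega
      have h2 : p.2.natAbs ≤ k := by omega
      constructor
      · constructor <;> omega
      · constructor <;> omega
    have hlat := norm_latt_ge hω hA hω' hB p
    rw [← hc] at hlat
    have hlat2 : ‖z0‖ + 1 ≤ ‖latt ω ω' p‖ := by
      have hmax : ((k:ℝ) + 1) ≤ ((max p.1.natAbs p.2.natAbs : ℕ) : ℝ) := by
        exact_mod_cast hfar
      have : (‖z0‖+1) ≤ 2*c*(k:ℝ) := by
        rw [div_le_iff₀ (by positivity)] at hknat
        linarith
      nlinarith
    have : 1 ≤ ‖z0 - latt ω ω' p‖ := by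
      have h1 : ‖latt ω ω' p‖ - ‖z0‖ ≤ ‖z0 - latt ω ω' p‖ := by
        rw [norm_sub_rev z0]
        exact norm_sub_norm_le _ _
      linarith
    rw [hδ]; linarith

lemma wp_eq (ω ω' z : ℂ) : wp ω ω' z = 1/z^2 +
    ∑' p : {p : ℤ × ℤ // p ≠ 0},
      (1/(z - latt ω ω' p.1)^2 - 1/(latt ω ω' p.1)^2) := rfl

lemma norm_one_div_sq_le {z z0 : ℂ} (hz0 : z0 ≠ 0) (h : ‖z0‖/2 ≤ ‖z‖) :
    ‖1/z^2‖ ≤ 4/‖z0‖^2 := by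
  have hz0pos : 0 < ‖z0‖ := norm_pos_iff.mpr hz0
  have hzpos : 0 < ‖z‖ := by linarith
  rw [norm_div, norm_pow, norm_one]
  rw [div_le_div_iff₀ (by positivity) (by positivity)]
  nlinarith

set_option maxHeartbeats 2000000 in
lemma bounded_near (hω : ω.im = 0) (hA : 0 < ω.re) (hω' : ω'.re = 0) (hB : 0 < ω'.im)
    (z0 : ℂ) (hz0 : z0 ≠ 0)
    (hfar : ∀ p : ℤ × ℤ, p ≠ 0 → latt ω ω' p ≠ z0) :
    ∃ δ B : ℝ, 0 < δ ∧ ∀ z : ℂ, ‖z - z0‖ < δ → ‖wp ω ω' z‖ ≤ B := by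
  obtain ⟨δ0, hδ0pos, hδ0le, hsep⟩ := separation hω hA hω' hB z0
  have hz0pos : 0 < ‖z0‖ := norm_pos_iff.mpr hz0
  set c := min ω.re ω'.im with hc
  have hcpos : 0 < c := lt_min hA hB
  set δ := min δ0 (‖z0‖/2) with hδ
  have hδpos : 0 < δ := lt_min hδ0pos (by positivity)
  set N := ‖z0‖ + 1 with hN
  set K := (1/δ^2 + 1/(2*c)^2) * (2*(N+1))^3 + 12*(N+1) with hK
  have hsum := summable_inv_cube hω hA hω' hB K
  refine ⟨δ, 4/‖z0‖^2 + ∑' p : {p : ℤ × ℤ // p ≠ 0}, K/‖latt ω ω' p.1‖^3, hδpos, ?_⟩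
  intro z hzd
  have hδle : δ ≤ δ0 := min_le_left _ _
  have hδle2 : δ ≤ ‖z0‖/2 := min_le_right _ _
  have hzN : ‖z‖ ≤ N := by
    have : ‖z‖ ≤ ‖z0‖ + ‖z - z0‖ := by
      calc ‖z‖ = ‖z0 + (z - z0)‖ := by ring_nf
        _ ≤ ‖z0‖ + ‖z - z0‖ := norm_add_le _ _
    rw [hN]; linarith
  have hzlow : ‖z0‖/2 ≤ ‖z‖ := by
    have h := norm_sub_norm_le z0 z
    rw [norm_sub_rev z0 z] at h
    linarith
  have hdist : ∀ p : {p : ℤ × ℤ // p ≠ 0}, δ ≤ ‖z - latt ω ω' p.1‖ := by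
    intro p
    have h1 := hsep p.1 p.2 (hfar p.1 p.2)
    have h2 : ‖z0 - latt ω ω' p.1‖ - ‖z - z0‖ ≤ ‖z - latt ω ω' p.1‖ := by
      have : ‖z0 - latt ω ω' p.1‖ ≤ ‖z0 - z‖ + ‖z - latt ω ω' p.1‖ := by
        calc ‖z0 - latt ω ω' p.1‖ = ‖(z0 - z) + (z - latt ω ω' p.1)‖ := by ring_nf
          _ ≤ _ := norm_add_le _ _
      rw [norm_sub_rev z0 z] at this
      linarith
    linarith
  have htb : ∀ p : {p : ℤ × ℤ // p ≠ 0},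
      ‖1/(z - latt ω ω' p.1)^2 - 1/(latt ω ω' p.1)^2‖ ≤ K/‖latt ω ω' p.1‖^3 := by
    intro p
    exact term_bound hcpos (by rw [hN]; positivity) hδpos hzN (hdist p)
      (two_c_le_norm_latt hω hA hω' hB p.2)
  rw [wp_eq]
  calc ‖1/z^2 + _‖ ≤ ‖1/z^2‖ + ‖∑' p : {p : ℤ × ℤ // p ≠ 0},
        (1/(z - latt ω ω' p.1)^2 - 1/(latt ω ω' p.1)^2)‖ := norm_add_le _ _
    _ ≤ 4/‖z0‖^2 + ∑' p : {p : ℤ × ℤ // p ≠ 0}, K/‖latt ω ω' p.1‖^3 := by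
        gcongr
        · exact norm_one_div_sq_le hz0 hzlow
        · exact tsum_of_norm_bounded hsum.hasSum htb

set_option maxHeartbeats 2000000 in
lemma blowup_near (hω : ω.im = 0) (hA : 0 < ω.re) (hω' : ω'.re = 0) (hB : 0 < ω'.im)
    {p0 : ℤ × ℤ} (hp0 : p0 ≠ 0) (M η : ℝ) (hη : 0 < η) :
    ∃ z : ℂ, ‖z - latt ω ω' p0‖ < η ∧ M < ‖wp ω ω' z‖ := by
  classical
  set w0 := latt ω ω' p0 with hw0
  have hw0ne : w0 ≠ 0 := latt_ne_zero hω hA hω' hB hp0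
  have hw0pos : 0 < ‖w0‖ := norm_pos_iff.mpr hw0ne
  obtain ⟨δ0, hδ0pos, hδ0le, hsep⟩ := separation hω hA hω' hB w0
  set c := min ω.re ω'.im with hc
  have hcpos : 0 < c := lt_min hA hB
  set δ := min (min δ0 (‖w0‖/2)) (η/2) with hδ
  have hδpos : 0 < δ := lt_min (lt_min hδ0pos (by positivity)) (by positivity)
  have hδle0 : δ ≤ δ0 := le_trans (min_le_left _ _) (min_le_left _ _)
  have hδlew : δ ≤ ‖w0‖/2 := le_trans (min_le_left _ _) (min_le_right _ _)
  have hδleη : δ ≤ η/2 := min_le_right _ _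
  set N := ‖w0‖ + 1 with hN
  set K := (1/δ^2 + 1/(2*c)^2) * (2*(N+1))^3 + 12*(N+1) with hK
  have hKpos : 0 < K := by rw [hK, hN]; positivity
  have hsumg := summable_inv_cube hω hA hω' hB K
  set G := ∑' p : {p : ℤ × ℤ // p ≠ 0}, K/‖latt ω ω' p.1‖^3 with hG
  have hGnn : 0 ≤ G := tsum_nonneg fun p => by positivity
  set C := max (M + G + 5/‖w0‖^2 + 1) 1 with hC
  have hC1 : (1:ℝ) ≤ C := le_max_right _ _
  have hCpos : (0:ℝ) < C := by linarith
  set ε := min (δ/2) (1/Real.sqrt C) with hε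
  have hεpos : 0 < ε := lt_min (by positivity) (by positivity)
  have hεδ : ε ≤ δ/2 := min_le_left _ _
  have hεC : C ≤ 1/ε^2 := by
    have h1 : ε ≤ 1/Real.sqrt C := min_le_right _ _
    have hsq : Real.sqrt C > 0 := Real.sqrt_pos.mpr hCpos
    have h2 : ε^2 ≤ (1/Real.sqrt C)^2 := by
      apply pow_le_pow_left₀ hεpos.le h1
    have h3 : (1/Real.sqrt C)^2 = 1/C := by
      rw [div_pow, one_pow, Real.sq_sqrt hCpos.le]
    rw [h3] at h2
    have h5 : C * ε^2 ≤ 1 := by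
      have h6 := mul_le_mul_of_nonneg_left h2 hCpos.le
      rwa [mul_one_div, div_self hCpos.ne'] at h6
    rw [le_div_iff₀ (pow_pos hεpos 2)]
    exact h5
  have hnormε : ‖(ε:ℂ)‖ = ε := by
    rw [Complex.norm_real, Real.norm_eq_abs, abs_of_pos hεpos]
  set z := w0 + (ε:ℂ) with hz
  have hzw0 : z - w0 = (ε:ℂ) := by rw [hz]; ring
  have hzdist : ‖z - w0‖ = ε := by rw [hzw0, hnormε]
  refine ⟨z, by rw [hzdist]; linarith, ?_⟩
  -- bounds
  have hzN : ‖z‖ ≤ N := by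
    have : ‖z‖ ≤ ‖w0‖ + ε := by
      calc ‖z‖ ≤ ‖w0‖ + ‖(ε:ℂ)‖ := norm_add_le _ _
        _ = ‖w0‖ + ε := by rw [hnormε]
    rw [hN]; nlinarith
  have hzlow : ‖w0‖/2 ≤ ‖z‖ := by
    have h1 : ‖w0‖ - ‖(ε:ℂ)‖ ≤ ‖z‖ := by
      have : ‖w0‖ ≤ ‖z‖ + ‖(ε:ℂ)‖ := by
        calc ‖w0‖ = ‖z - (ε:ℂ)‖ := by rw [hz]; ring_nf
          _ ≤ ‖z‖ + ‖(ε:ℂ)‖ := norm_sub_le _ _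
      linarith
    rw [hnormε] at h1
    nlinarith
  set P0 : {p : ℤ × ℤ // p ≠ 0} := ⟨p0, hp0⟩ with hP0
  set f : {p : ℤ × ℤ // p ≠ 0} → ℂ :=
    fun p => 1/(z - latt ω ω' p.1)^2 - 1/(latt ω ω' p.1)^2 with hf
  have hdist : ∀ p : {p : ℤ × ℤ // p ≠ 0}, p ≠ P0 → δ ≤ ‖z - latt ω ω' p.1‖ := by
    intro p hp
    have hne : latt ω ω' p.1 ≠ w0 := by
      rw [hw0]
      intro h
      exact hp (Subtype.ext (latt_injective hω hA hω' hB h))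
    have h1 := hsep p.1 p.2 hne
    have h2 : ‖w0 - latt ω ω' p.1‖ - ‖z - w0‖ ≤ ‖z - latt ω ω' p.1‖ := by
      have : ‖w0 - latt ω ω' p.1‖ ≤ ‖w0 - z‖ + ‖z - latt ω ω' p.1‖ := by
        calc ‖w0 - latt ω ω' p.1‖ = ‖(w0 - z) + (z - latt ω ω' p.1)‖ := by ring_nf
          _ ≤ _ := norm_add_le _ _
      rw [norm_sub_rev w0 z] at this
      linarith
    rw [hzdist] at h2
    linarith
  have htb : ∀ p : {p : ℤ × ℤ // p ≠ 0},
      ‖if p = P0 then 0 else f p‖ ≤ K/‖latt ω ω' p.1‖^3 := by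
    intro p
    by_cases hp : p = P0
    · rw [if_pos hp, norm_zero]; positivity
    · rw [if_neg hp]
      exact term_bound hcpos (by rw [hN]; positivity) hδpos hzN (hdist p hp)
        (two_c_le_norm_latt hω hA hω' hB p.2)
  have hsum0 : Summable (fun p : {p : ℤ × ℤ // p ≠ 0} => if p = P0 then 0 else f p) := by
    apply Summable.of_norm
    exact hsumg.of_nonneg_of_le (fun p => norm_nonneg _) htb
  have hsum1 : Summable (fun p : {p : ℤ × ℤ // p ≠ 0} => if p = P0 then f p else 0) := by
    apply summable_of_ne_finset_zero (s := {P0})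
    intro p hp
    rw [if_neg (by simpa using hp)]
  have hfsum : Summable f := by
    refine (hsum0.add hsum1).congr fun p => ?_
    by_cases hp : p = P0 <;> simp [hp]
  have hsplit : ∑' p, f p = f P0 + ∑' p, (if p = P0 then 0 else f p) :=
    Summable.tsum_eq_add_tsum_ite hfsum P0
  have htail : ‖∑' p, (if p = P0 then 0 else f p)‖ ≤ G :=
    tsum_of_norm_bounded hsumg.hasSum htb
  have hfP0 : f P0 = 1/(ε:ℂ)^2 - 1/w0^2 := by
    rw [hf]
    simp only
    rw [← hw0, hzw0]
  have hfP0norm : 1/ε^2 - 1/‖w0‖^2 ≤ ‖f P0‖ := by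
    rw [hfP0]
    have h1 : ‖(1:ℂ)/(ε:ℂ)^2‖ = 1/ε^2 := by
      rw [norm_div, norm_pow, norm_one, hnormε]
    have h2 : ‖(1:ℂ)/w0^2‖ = 1/‖w0‖^2 := by
      rw [norm_div, norm_pow, norm_one]
    calc 1/ε^2 - 1/‖w0‖^2 = ‖(1:ℂ)/(ε:ℂ)^2‖ - ‖(1:ℂ)/w0^2‖ := by rw [h1, h2]
      _ ≤ ‖1/(ε:ℂ)^2 - 1/w0^2‖ := norm_sub_norm_le _ _
  have hwpval : wp ω ω' z = 1/z^2 + (f P0 + ∑' p, (if p = P0 then 0 else f p)) := by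
    rw [wp_eq, ← hsplit]
  have h1z : ‖1/z^2‖ ≤ 4/‖w0‖^2 := norm_one_div_sq_le hw0ne hzlow
  have hlower : ‖f P0‖ - ‖1/z^2‖ - ‖∑' p, (if p = P0 then 0 else f p)‖ ≤ ‖wp ω ω' z‖ := by
    have : ‖f P0‖ ≤ ‖wp ω ω' z‖ + ‖1/z^2‖ + ‖∑' p, (if p = P0 then 0 else f p)‖ := by
      calc ‖f P0‖ = ‖wp ω ω' z - 1/z^2 - ∑' p, (if p = P0 then 0 else f p)‖ := by
            rw [hwpval]
            congr 1
            ring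
        _ ≤ ‖wp ω ω' z - 1/z^2‖ + ‖∑' p, (if p = P0 then 0 else f p)‖ := norm_sub_le _ _
        _ ≤ ‖wp ω ω' z‖ + ‖1/z^2‖ + ‖∑' p, (if p = P0 then 0 else f p)‖ := by
            have := norm_sub_le (wp ω ω' z) (1/z^2)
            linarith
    linarith
  have hfinal : M < 1/ε^2 - 1/‖w0‖^2 - 4/‖w0‖^2 - G := by
    have h5 : 1/‖w0‖^2 + 4/‖w0‖^2 = 5/‖w0‖^2 := by ring
    have := le_max_left (M + G + 5/‖w0‖^2 + 1) 1
    nlinarith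
  calc M < 1/ε^2 - 1/‖w0‖^2 - 4/‖w0‖^2 - G := hfinal
    _ ≤ ‖f P0‖ - ‖1/z^2‖ - ‖∑' p, (if p = P0 then 0 else f p)‖ := by
        have := hfP0norm
        linarith [h1z, htail]
    _ ≤ ‖wp ω ω' z‖ := hlower

end Stmt12aux

open Stmt12aux Real in
set_option maxHeartbeats 2000000 in
theorem stmt12_main (κ lam : ℝ) (hκ : κ ∈ Set.Ioo (0:ℝ) 1) (hlam : lam = Real.sqrt (1 - κ^2))
    (ωκ ωκ' ωl ωl' : ℂ)
    (hωκ : ωκ.im = 0) (hωκpos : 0 < ωκ.re) (hωκ' : ωκ'.re = 0) (hωκ'pos : 0 < ωκ'.im)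
    (hωl : ωl.im = 0) (hωlpos : 0 < ωl.re) (hωl' : ωl'.re = 0) (hωl'pos : 0 < ωl'.im)
    (hmod : ∀ z : ℂ, wp ωκ (ωκ' / 2) z = -2 * wp ωl ωl' ((Real.sqrt 2 : ℂ) * Complex.I * z)) :
    ωκ' = (Real.sqrt 2 : ℂ) * Complex.I * ωl := by
  set c : ℂ := (Real.sqrt 2 : ℂ) * Complex.I with hcdef
  have hs2 : (0:ℝ) < Real.sqrt 2 := Real.sqrt_pos.mpr (by norm_num)
  have hs2sq : Real.sqrt 2 ^ 2 = 2 := Real.sq_sqrt (by norm_num)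
  have hcnorm : ‖c‖ = Real.sqrt 2 := by
    rw [hcdef, norm_mul, Complex.norm_real, Complex.norm_I, Real.norm_eq_abs,
      abs_of_pos hs2, mul_one]
  have hcne : c ≠ 0 := by
    intro h
    rw [h, norm_zero] at hcnorm
    linarith
  -- rectangularity of the κ-lattice (ωκ, ωκ'/2)
  have hhalf_re : (ωκ'/2).re = 0 := by
    rw [Complex.div_re]
    simp [hωκ']
  have hhalf_im : 0 < (ωκ'/2).im := by
    rw [Complex.div_im]
    simp only [Complex.re_ofNat, Complex.im_ofNat]
    have : Complex.normSq 2 = 4 := by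
      simp [Complex.normSq_apply]
      norm_num
    rw [this]
    simp [hωκ']
    linarith
  have hωκ'ne : ωκ' ≠ 0 := by
    intro h
    rw [h] at hωκ'pos
    simp at hωκ'pos
  have hωlne : ωl ≠ 0 := by
    intro h
    rw [h] at hωlpos
    simp at hωlpos
  -- packet 1 : c * ωκ' lies in the λ-lattice
  have pack1 : ∃ p : ℤ × ℤ, p ≠ 0 ∧ latt ωl ωl' p = c * ωκ' := by
    by_contra hcon
    push_neg at hcon
    have hz0ne : c * ωκ' ≠ 0 := mul_ne_zero hcne hωκ'ne
    obtain ⟨δ, B, hδpos, hbd⟩ :=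
      bounded_near hωl hωlpos hωl' hωl'pos (c * ωκ') hz0ne fun p hp => hcon p hp
    have hlatt01 : latt ωκ (ωκ'/2) ((0:ℤ),(1:ℤ)) = ωκ' := by
      simp [latt]
      ring
    obtain ⟨z, hz1, hz2⟩ := blowup_near hωκ hωκpos hhalf_re hhalf_im
      (p0 := ((0:ℤ),(1:ℤ))) (by simp [Prod.ext_iff]) (2*B) (δ/2) (by positivity)
    rw [hlatt01] at hz1
    have harg : ‖c * z - c * ωκ'‖ < δ := by
      have : c * z - c * ωκ' = c * (z - ωκ') := by ring
      rw [this, norm_mul, hcnorm]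
      nlinarith [norm_nonneg (z - ωκ'), Real.sq_sqrt (by norm_num : (2:ℝ) ≥ 0),
        Real.sqrt_lt_sqrt (by norm_num : (0:ℝ) ≤ 2) (by norm_num : (2:ℝ) < 4)]
    have hbound := hbd (c * z) harg
    have heq := hmod z
    have : ‖wp ωκ (ωκ'/2) z‖ = 2 * ‖wp ωl ωl' (c*z)‖ := by
      rw [heq, norm_mul]
      norm_num
    rw [this] at hz2
    linarith
  -- packet 2 : -√2 i ωl lies in the κ-lattice
  have pack2 : ∃ q : ℤ × ℤ, q ≠ 0 ∧ latt ωκ (ωκ'/2) q = -c * ωl := by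
    by_contra hcon
    push_neg at hcon
    have hz1ne : -c * ωl ≠ 0 := mul_ne_zero (neg_ne_zero.mpr hcne) hωlne
    obtain ⟨δ, B, hδpos, hbd⟩ :=
      bounded_near hωκ hωκpos hhalf_re hhalf_im (-c * ωl) hz1ne fun p hp => hcon p hp
    have hlatt10 : latt ωl ωl' ((1:ℤ),(0:ℤ)) = 2*ωl := by
      simp [latt]
    obtain ⟨u, hu1, hu2⟩ := blowup_near hωl hωlpos hωl' hωl'pos
      (p0 := ((1:ℤ),(0:ℤ))) (by simp [Prod.ext_iff]) (B/2) δ hδpos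
    rw [hlatt10] at hu1
    set z := u / c with hzdef
    have hcz : c * z = u := by
      rw [hzdef]
      field_simp
    have hcz1 : c * (-c * ωl) = 2 * ωl := by
      rw [hcdef]
      have : ((Real.sqrt 2 : ℂ) * Complex.I) * (-((Real.sqrt 2 : ℂ) * Complex.I) * ωl)
          = - ((Real.sqrt 2:ℂ)^2) * (Complex.I^2) * ωl := by ring
      rw [this, Complex.I_sq]
      have h2 : ((Real.sqrt 2 : ℂ))^2 = 2 := by
        rw [← Complex.ofReal_pow, hs2sq]
        norm_num
      rw [h2]
      ring
    have harg : ‖z - (-c * ωl)‖ < δ := by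
      have h1 : c * (z - (-c * ωl)) = u - 2*ωl := by
        rw [mul_sub, hcz, hcz1]
      have h2 : ‖c * (z - (-c * ωl))‖ = Real.sqrt 2 * ‖z - (-c*ωl)‖ := by
        rw [norm_mul, hcnorm]
      rw [h1] at h2
      have hs21 : 1 ≤ Real.sqrt 2 := by
        rw [show (1:ℝ) = Real.sqrt 1 by simp]
        exact Real.sqrt_le_sqrt (by norm_num)
      nlinarith [norm_nonneg (z - (-c*ωl))]
    have hbound := hbd z harg
    have heq := hmod z
    rw [hcz] at heq
    have : ‖wp ωκ (ωκ'/2) z‖ = 2 * ‖wp ωl ωl' u‖ := by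
      rw [heq, norm_mul]
      norm_num
    rw [this] at hbound
    linarith
  -- arithmetic endgame
  obtain ⟨⟨m, n⟩, hmn0, hmn⟩ := pack1
  obtain ⟨⟨q1, q2⟩, hq0, hq⟩ := pack2
  set t := ωκ'.im with ht
  set a := ωl.re with ha
  have hre1 := congrArg Complex.re hmn
  have him1 := congrArg Complex.im hmn
  rw [latt_re hωl hωl'] at hre1
  rw [latt_im hωl hωl'] at him1
  have hcωκ're : (c * ωκ').re = -(Real.sqrt 2 * t) := by
    rw [hcdef]
    simp [Complex.mul_re, Complex.mul_im, hωκ', ← ht]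
  have hcωκ'im : (c * ωκ').im = 0 := by
    rw [hcdef]
    simp [Complex.mul_re, Complex.mul_im, hωκ']
  rw [hcωκ're] at hre1
  rw [hcωκ'im] at him1
  -- n = 0 and 2 m a = -√2 t
  have hn0 : n = 0 := by
    have : (2:ℝ) * (n:ℝ) * ωl'.im = 0 := by simpa using him1
    have hn : (n:ℝ) = 0 := by
      rcases mul_eq_zero.mp this with h | h
      · rcases mul_eq_zero.mp h with h' | h'
        · norm_num at h'
        · exact h'
      · exact absurd h hωl'pos.ne'
    exact_mod_cast hn
  have hre2 := congrArg Complex.re hq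
  have him2 := congrArg Complex.im hq
  rw [latt_re hωκ hhalf_re] at hre2
  rw [latt_im hωκ hhalf_re] at him2
  have hz1re : (-c * ωl).re = 0 := by
    rw [hcdef]
    simp [Complex.mul_re, Complex.mul_im, hωl]
  have hz1im : (-c * ωl).im = -(Real.sqrt 2 * a) := by
    rw [hcdef]
    simp [Complex.mul_re, Complex.mul_im, hωl, ← ha]
  rw [hz1re] at hre2
  rw [hz1im] at him2
  have hq10 : q1 = (0:ℤ) := by
    have : (2:ℝ) * (q1:ℝ) * ωκ.re = 0 := by simpa using hre2
    have hh : (q1:ℝ) = 0 := by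
      rcases mul_eq_zero.mp this with h | h
      · rcases mul_eq_zero.mp h with h' | h'
        · norm_num at h'
        · exact h'
      · exact absurd h hωκpos.ne'
    exact_mod_cast hh
  -- im of ωκ'/2
  have hhalfim : (ωκ'/2).im = t/2 := by
    rw [Complex.div_im]
    simp only [Complex.re_ofNat, Complex.im_ofNat]
    have : Complex.normSq 2 = 4 := by
      simp [Complex.normSq_apply]
      norm_num
    rw [this]
    simp [hωκ', ← ht]
    ring
  rw [hhalfim] at him2
  -- equations : 2 m a = -√2 t  and  q2 t = -√2 a
  have heq1 : 2 * (m:ℝ) * a = -(Real.sqrt 2 * t) := hre1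
  have heq2 : (q2:ℝ) * t = -(Real.sqrt 2 * a) := by
    have : (2:ℝ) * (q2:ℝ) * (t/2) = -(Real.sqrt 2 * a) := him2
    linarith
  have htpos : 0 < t := hωκ'pos
  have hapos : 0 < a := hωlpos
  -- multiply the two equations
  have hmq : (m:ℝ) * (q2:ℝ) = 1 := by
    have h1 : (2 * (m:ℝ) * a) * ((q2:ℝ) * t) = (Real.sqrt 2 * t) * (Real.sqrt 2 * a) := by
      rw [heq1, heq2]
      ring
    have h2 : (Real.sqrt 2 * t) * (Real.sqrt 2 * a) = 2 * t * a := by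
      have he : (Real.sqrt 2 * t) * (Real.sqrt 2 * a) = Real.sqrt 2 ^ 2 * (t*a) := by ring
      rw [he, hs2sq]
      ring
    rw [h2] at h1
    have key : ((m:ℝ)*(q2:ℝ) - 1) * (2*t*a) = 0 := by linear_combination h1
    rcases mul_eq_zero.mp key with h | h
    · linarith
    · exfalso
      nlinarith
  have hmqZ : m * q2 = 1 := by exact_mod_cast hmq
  have hmneg : (m:ℝ) < 0 := by nlinarith
  have hm1 : m = -1 := by
    rcases Int.mul_eq_one_iff_eq_one_or_neg_one.mp hmqZ with ⟨h1, h2⟩ | ⟨h1, h2⟩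
    · exfalso
      rw [h1] at hmneg
      norm_num at hmneg
    · exact h1
  have hteq : t = Real.sqrt 2 * a := by
    rw [hm1] at heq1
    push_cast at heq1
    nlinarith [hs2sq, hs2]
  -- final identity
  apply Complex.ext
  · rw [hωκ']
    rw [hcdef]
    simp [Complex.mul_re, Complex.mul_im, hωl]
  · rw [← ht, hteq, hcdef]
    simp [Complex.mul_re, Complex.mul_im, hωl, ← ha]


open Real in
/-- Signature three half-periods: given the modular-transformation identity
℘(z; ω_κ, ω_κ′/2) = −2·p_λ(√2·i·z) and the hypergeometric formula for the real
half-periods, one has ω_κ′ = √2·i·ω_λ, and hence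
ω_κ = (π/2)F(1/4,3/4;1;κ²) and ω_κ′ = i(√2π/2)F(1/4,3/4;1;1−κ²). -/
theorem stmt12 (κ lam : ℝ) (hκ : κ ∈ Set.Ioo (0:ℝ) 1) (hlam : lam = Real.sqrt (1 - κ^2))
    (ωκ ωκ' ωl ωl' : ℂ)
    (hωκ : ωκ.im = 0) (hωκpos : 0 < ωκ.re) (hωκ' : ωκ'.re = 0) (hωκ'pos : 0 < ωκ'.im)
    (hωl : ωl.im = 0) (hωlpos : 0 < ωl.re) (hωl' : ωl'.re = 0) (hωl'pos : 0 < ωl'.im)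
    (hrealκ : ωκ = ((π/2 * hypF (1/4) (3/4) 1 (κ^2) : ℝ) : ℂ))
    (hreall : ωl = ((π/2 * hypF (1/4) (3/4) 1 (lam^2) : ℝ) : ℂ))
    (hmod : ∀ z : ℂ, wp ωκ (ωκ' / 2) z = -2 * wp ωl ωl' ((Real.sqrt 2 : ℂ) * Complex.I * z)) :
    ωκ' = (Real.sqrt 2 : ℂ) * Complex.I * ωl ∧
    ωκ = ((π/2 * hypF (1/4) (3/4) 1 (κ^2) : ℝ) : ℂ) ∧
    ωκ' = Complex.I * ((Real.sqrt 2 * π/2 * hypF (1/4) (3/4) 1 (1 - κ^2) : ℝ) : ℂ) := by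
  have hmain := stmt12_main κ lam hκ hlam ωκ ωκ' ωl ωl'
    hωκ hωκpos hωκ' hωκ'pos hωl hωlpos hωl' hωl'pos hmod
  refine ⟨hmain, hrealκ, ?_⟩
  have hl2 : lam^2 = 1 - κ^2 := by
    rw [hlam, Real.sq_sqrt]
    nlinarith [hκ.1, hκ.2]
  rw [hmain, hreall, hl2]
  push_cast
  ring
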